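/- arXiv:1907.04399 — 3 statements merged into one kernel-verified Lean document; each statement's English description precedes it below -/
import Mathlib

section
/- For every real C > 0 and any sequence of pairs (a_B, B) with a_B = ⌊C√B⌋, letting h_B = ⌊(-(2a_B+1) + √((2a_B+1)² + 8B))/2⌋ and p_B = ⌊(-1 + √(1 + 8(B − a_B)))/2⌋, the ratio (a_B + p_B)/(a_B + h_B) tends to (C + √2)/√(C² + 2) as B → ∞. -/
/-!
Both `h_B` and `p_B` are floors of the positive root `quadRoot b c` of `w ^ 2 + b w = 2 c`, for
`(b, c) = (2 a_B + 1, B)` and `(1, B - a_B)` respectively, and this root is homogeneous: scaling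
`b` by `s` and `c` by `s ^ 2` scales it by `s`. With `s = √B` one has `a_B / s → C`, hence
`h_B / s → quadRoot (2C) 1 = √(C² + 2) - C` and `p_B / s → quadRoot 0 1 = √2`; taking floors
perturbs the numerators only by a bounded amount. Dividing numerator and denominator of the ratio
by `s` gives the limit.
-/

open Filter Topology

noncomputable def quadRoot (b c : ℝ) : ℝ := (-b + √(b ^ 2 + 8 * c)) / 2

lemma quadRoot_div {s : ℝ} (hs : 0 < s) (b c : ℝ) :
    quadRoot b c / s = quadRoot (b / s) (c / s ^ 2) := by
  have hsq : √(s ^ 2) = s := Real.sqrt_sq hs.le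
  rw [quadRoot, quadRoot, div_pow, ← mul_div_assoc, ← add_div, Real.sqrt_div' _ (by positivity),
    hsq]
  field_simp

lemma quadRoot_two_mul_one (c : ℝ) : quadRoot (2 * c) 1 = √(c ^ 2 + 2) - c := by
  have h : (2 * c) ^ 2 + 8 * 1 = 2 ^ 2 * (c ^ 2 + 2) := by ring
  rw [quadRoot, h, Real.sqrt_mul (by positivity), Real.sqrt_sq zero_le_two]
  ring

lemma continuous_quadRoot : Continuous fun p : ℝ × ℝ => quadRoot p.1 p.2 := by
  unfold quadRoot
  fun_prop

lemma Filter.Tendsto.quadRoot {α : Type*} {l : Filter α} {b c : α → ℝ} {b₀ c₀ : ℝ}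
    (hb : Tendsto b l (𝓝 b₀)) (hc : Tendsto c l (𝓝 c₀)) :
    Tendsto (fun x => _root_.quadRoot (b x) (c x)) l (𝓝 (_root_.quadRoot b₀ c₀)) :=
  (continuous_quadRoot.tendsto _).comp (hb.prodMk_nhds hc)

lemma Filter.Tendsto.div_of_abs_sub_le {α : Type*} {l : Filter α} {f g s : α → ℝ} {L K : ℝ}
    (hf : Tendsto (fun x => f x / s x) l (𝓝 L)) (hs : Tendsto s l atTop)
    (hfg : ∀ᶠ x in l, |g x - f x| ≤ K) :
    Tendsto (fun x => g x / s x) l (𝓝 L) := by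
  have herr : Tendsto (fun x => (g x - f x) / s x) l (𝓝 0) := by
    have hK : Tendsto (fun x => K * (s x)⁻¹) l (𝓝 0) := by
      simpa using hs.inv_tendsto_atTop.const_mul K
    refine squeeze_zero_norm' ?_ hK
    filter_upwards [hfg, hs.eventually_gt_atTop 0] with x hx hsx
    rw [Real.norm_eq_abs, abs_div, abs_of_pos hsx, div_eq_mul_inv]
    gcongr
  have hsum := hf.add herr
  rw [add_zero] at hsum
  refine hsum.congr' (.of_forall fun x => ?_)
  rw [← add_div, add_sub_cancel]

lemma abs_intFloor_sub_le (x : ℝ) : |(⌊x⌋ : ℝ) - x| ≤ 1 := by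
  rw [abs_sub_comm, Int.self_sub_floor, abs_of_nonneg (Int.fract_nonneg x)]
  exact (Int.fract_lt_one x).le

lemma abs_natFloor_sub_le {x : ℝ} (hx : 0 ≤ x) : |(⌊x⌋₊ : ℝ) - x| ≤ 1 := by
  rw [abs_le]
  constructor <;> linarith [Nat.floor_le hx, Nat.lt_floor_add_one x]

section FloorAsymptotics

variable {α : Type*} {l : Filter α} {s : α → ℝ}

lemma tendsto_natFloor_const_mul_div {C : ℝ} (hC : 0 ≤ C) (hs : Tendsto s l atTop) :
    Tendsto (fun x => (⌊C * s x⌋₊ : ℝ) / s x) l (𝓝 C) := by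
  refine Tendsto.div_of_abs_sub_le (f := fun x => C * s x) ?_ hs
    (hs.eventually_ge_atTop 0 |>.mono fun x hx => abs_natFloor_sub_le (by positivity))
  refine tendsto_const_nhds.congr' ?_
  filter_upwards [hs.eventually_gt_atTop 0] with x hx
  field_simp

lemma tendsto_intFloor_quadRoot_div {b c : α → ℝ} {b₀ c₀ : ℝ} (hs : Tendsto s l atTop)
    (hb : Tendsto (fun x => b x / s x) l (𝓝 b₀))
    (hc : Tendsto (fun x => c x / s x ^ 2) l (𝓝 c₀)) :
    Tendsto (fun x => (⌊quadRoot (b x) (c x)⌋ : ℝ) / s x) l (𝓝 (quadRoot b₀ c₀)) := by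
  refine Tendsto.div_of_abs_sub_le ?_ hs (.of_forall fun x => abs_intFloor_sub_le _)
  refine (hb.quadRoot hc).congr' ?_
  filter_upwards [hs.eventually_gt_atTop 0] with x hx
  rw [quadRoot_div hx]

end FloorAsymptotics

theorem stmt_3 (C : ℝ) (hC : 0 < C) :
    Filter.Tendsto (fun B : ℕ =>
      (((⌊C * Real.sqrt B⌋₊ : ℝ) +
        ((⌊(-1 + Real.sqrt (1 + 8 * ((B : ℝ) - ⌊C * Real.sqrt B⌋₊))) / 2⌋ : ℤ) : ℝ)) /
       ((⌊C * Real.sqrt B⌋₊ : ℝ) +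
        ((⌊(-(2 * (⌊C * Real.sqrt B⌋₊ : ℝ) + 1) +
            Real.sqrt ((2 * (⌊C * Real.sqrt B⌋₊ : ℝ) + 1) ^ 2 + 8 * B)) / 2⌋ : ℤ) : ℝ))))
      Filter.atTop (nhds ((C + Real.sqrt 2) / Real.sqrt (C ^ 2 + 2))) := by
  set s : ℕ → ℝ := fun B => √B
  set a : ℕ → ℝ := fun B => ⌊C * s B⌋₊
  have hs : Tendsto s atTop atTop := Real.tendsto_sqrt_atTop.comp tendsto_natCast_atTop_atTop
  have hs_pos : ∀ᶠ B in atTop, 0 < s B := hs.eventually_gt_atTop 0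
  have hsq : ∀ B, s B ^ 2 = B := fun B => Real.sq_sqrt B.cast_nonneg
  have hinv : Tendsto (fun B => 1 / s B) atTop (𝓝 0) :=
    hs.inv_tendsto_atTop.congr fun B => (one_div (s B)).symm
  have ha : Tendsto (fun B => a B / s B) atTop (𝓝 C) := tendsto_natFloor_const_mul_div hC.le hs
  have hp : Tendsto (fun B => (⌊quadRoot 1 (B - a B)⌋ : ℝ) / s B) atTop (𝓝 (quadRoot 0 1)) := by
    refine tendsto_intFloor_quadRoot_div hs hinv ?_
    have hc := (tendsto_const_nhds (x := (1 : ℝ))).sub (ha.mul hinv)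
    rw [mul_zero, sub_zero] at hc
    refine hc.congr' ?_
    filter_upwards [hs_pos] with B hB
    rw [← hsq B]
    field_simp
  have hh : Tendsto (fun B => (⌊quadRoot (2 * a B + 1) B⌋ : ℝ) / s B) atTop
      (𝓝 (quadRoot (2 * C) 1)) := by
    refine tendsto_intFloor_quadRoot_div hs ?_ (tendsto_const_nhds.congr' ?_)
    · have hb := (ha.const_mul 2).add hinv
      rw [add_zero] at hb
      exact hb.congr fun B => by ring
    · filter_upwards [hs_pos] with B hB
      rw [← hsq B, div_self (pow_ne_zero 2 hB.ne')]
  have hroot : quadRoot 0 1 = √2 := by simpa using quadRoot_two_mul_one 0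
  rw [hroot] at hp
  rw [quadRoot_two_mul_one] at hh
  have hlim := (ha.add hp).div (ha.add hh) (by rw [add_sub_cancel]; positivity)
  rw [add_sub_cancel] at hlim
  refine hlim.congr' ?_
  filter_upwards [hs_pos] with B hB
  simp only [Pi.div_apply]
  rw [← add_div, ← add_div, div_div_div_cancel_right₀ hB.ne', quadRoot, quadRoot, one_pow]
end

section
/- If B is a positive integer and an algorithm for the shared memory switch with fractional packets is optimal, then there exists an optimal algorithm whose buffer never contains more than one fractional (non-integer-sized) packet at any time; consequently, there exists an optimal algorithm that uses only integer packets. -/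
/-- A (fractional) buffer-management schedule for a shared memory switch with
buffer size `B`, queues `0, …, N-1` and arrival sequence `σ` (number of unit
packets arriving to each queue on each slot). `q t j` is the (possibly
fractional) content of queue `j` after the admission phase of slot `t`:
contents are nonnegative, total occupancy is at most `B`, and between
consecutive slots each nonempty queue transmits at most one unit of packet mass
while arbitrary fractions may be accepted from arrivals or pushed out. -/
def FracSchedule (B N : ℕ) (σ : ℕ → ℕ → ℕ) (q : ℕ → ℕ → ℝ) : Prop :=
  (∀ t j, 0 ≤ q t j) ∧ (∀ t j, N ≤ j → q t j = 0) ∧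
  (∀ t, ∑ j ∈ Finset.range N, q t j ≤ B) ∧
  (∀ j, q 0 j ≤ σ 0 j) ∧
  (∀ t j, q (t + 1) j ≤ max (q t j - 1) 0 + σ (t + 1) j)

/-- Total transmitted packet mass (each nonempty queue transmits up to one unit
per slot, whole packets first) over the relevant horizon. -/
noncomputable def fracValue (B N T : ℕ) (q : ℕ → ℕ → ℝ) : ℝ :=
  ∑ t ∈ Finset.range (T + B + 1), ∑ j ∈ Finset.range N, min (q t j) 1

/-!
Truncating a schedule at the horizon `T + B + 1` changes neither feasibility nor value, so we work
with schedules vanishing from the horizon on. Among optimal ones, the number of fractional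
coordinates plus the number of slack buffer and transition constraints can be decreased as long
as some coordinate is fractional, which yields an optimal integral schedule.

For the descent, move `q` along a direction `d` that vanishes on integral coordinates and keeps
every tight constraint tight. For small `δ > 0` both `q + δ • d` and `q - δ • d` are feasible
and the value is affine in `δ`, so optimality forces its slope to vanish; moving as far as
possible makes a coordinate integral or a constraint tight, without undoing any of them.

Such a direction exists by integrality. A maximal run of tight transitions out of contents above
`1` (a chain) keeps its fractional part, and at a full-buffer slot the fractional parts present
sum to an integer. Numbering the full-buffer slots, each fractional chain covers an interval of
them, and these intervals, weighted by the fractional parts, have integral coverage everywhere;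
so no point is an endpoint of exactly one interval. Hence there are at most as many endpoints as
intervals, and a dimension count gives a nonzero signed weighting with zero coverage; spread
along the chains, it is the direction `d`.
-/

open Finset

theorem exists_max_step_of_affine_nonneg (s : Finset (ℝ × ℝ)) (hs : ∀ p ∈ s, 0 ≤ p.1)
    (hs_tight : ∀ p ∈ s, p.1 = 0 → p.2 = 0) (hneg : ∃ p ∈ s, p.2 < 0) :
    ∃ δ > 0, (∀ p ∈ s, 0 ≤ p.1 + δ * p.2) ∧ ∃ p ∈ s, 0 < p.1 ∧ p.1 + δ * p.2 = 0 := by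
  obtain ⟨p₀, hp₀, hp₀neg⟩ := hneg
  obtain ⟨p, hpD, hmin⟩ := (s.filter (·.2 < 0)).exists_min_image (fun p => p.1 / -p.2)
    ⟨p₀, mem_filter.2 ⟨hp₀, hp₀neg⟩⟩
  obtain ⟨hp, hpneg⟩ := mem_filter.1 hpD
  have hpos : 0 < p.1 := (hs p hp).lt_of_ne' fun h => hpneg.ne (hs_tight p hp h)
  refine ⟨p.1 / -p.2, div_pos hpos (neg_pos.2 hpneg), fun r hr => ?_, p, hp, hpos, ?_⟩
  · rcases le_or_gt 0 r.2 with h | h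
    · exact add_nonneg (hs r hr) (mul_nonneg (div_pos hpos (neg_pos.2 hpneg)).le h)
    · have := hmin r (mem_filter.2 ⟨hr, h⟩)
      rw [le_div_iff₀ (neg_pos.2 h)] at this
      linarith
  · have := hpneg.ne
    field_simp
    ring

theorem max_add_sub_one_zero_of_floor_le_of_le_ceil {x y : ℝ} (hlo : ⌊x⌋ ≤ x + y)
    (hhi : x + y ≤ ⌈x⌉) : max (x + y - 1) 0 = max (x - 1) 0 + if 1 < x then y else 0 := by
  split_ifs with hx
  · have : (1 : ℝ) ≤ ⌊x⌋ := by exact_mod_cast Int.le_floor.2 (by exact_mod_cast hx.le)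
    rw [max_eq_left (by linarith), max_eq_left (by linarith)]
    ring
  · have : (⌈x⌉ : ℝ) ≤ 1 := by exact_mod_cast Int.ceil_le.2 (by exact_mod_cast not_lt.1 hx)
    rw [max_eq_right (by linarith), max_eq_right (by linarith)]
    ring

theorem min_add_one_of_floor_le_of_le_ceil {x y : ℝ} (hlo : ⌊x⌋ ≤ x + y)
    (hhi : x + y ≤ ⌈x⌉) : min (x + y) 1 = min x 1 + if x < 1 then y else 0 := by
  split_ifs with hx
  · have : (⌈x⌉ : ℝ) ≤ 1 := by exact_mod_cast Int.ceil_le.2 (by exact_mod_cast hx.le)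
    rw [min_eq_left (by linarith), min_eq_left hx.le]
  · have : (1 : ℝ) ≤ ⌊x⌋ := by exact_mod_cast Int.le_floor.2 (by exact_mod_cast not_lt.1 hx)
    rw [min_eq_right (by linarith), min_eq_right (not_lt.1 hx)]
    ring

theorem card_add_card_add_card_lt {α β γ : Type*} {s s' : Finset α} {t t' : Finset β}
    {u u' : Finset γ} (hs : s' ⊆ s) (ht : t' ⊆ t) (hu : u' ⊆ u)
    (h : s' ⊂ s ∨ t' ⊂ t ∨ u' ⊂ u) : #s' + #t' + #u' < #s + #t + #u := by
  have := card_le_card hs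
  have := card_le_card ht
  have := card_le_card hu
  rcases h with h | h | h <;> have := card_lt_card h <;> omega

namespace Nat

variable {p : ℕ → Prop} [DecidablePred p]

theorem count_le_count_iff_le {a r : ℕ} (hr : p r) : count p a ≤ count p r ↔ a ≤ r :=
  ⟨fun h => not_lt.1 fun hlt => (count_strict_mono hr hlt).not_ge h,
    fun h => count_monotone p h⟩

theorem count_lt_count_iff_lt {r b : ℕ} (hr : p r) : count p r < count p b ↔ r < b :=
  ⟨lt_of_count_lt_count, count_strict_mono hr⟩

theorem exists_count_eq_of_lt_count {k b : ℕ} (h : k < count p b) : ∃ r, p r ∧ count p r = k := by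
  induction b with
  | zero => simp at h
  | succ b ih =>
    by_cases hk : k < count p b
    · exact ih hk
    · rw [count_succ] at h
      split_ifs at h with hb
      · exact ⟨b, hb, by omega⟩
      · omega

end Nat

section IntervalFamily

variable {ι : Type*} (E : Finset ι) (u v : ι → ℕ)

theorem card_endpoints_le_of_forall_ne_one
    (hdeg : ∀ n, #{c ∈ E | u c = n} + #{c ∈ E | v c = n} ≠ 1) :
    #(E.image u ∪ E.image v) ≤ #E := by
  classical
  set S := E.image u ∪ E.image v
  have hu := card_eq_sum_card_fiberwise (f := u) (s := E) (t := S)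
    fun c hc => mem_union_left _ (mem_image_of_mem u hc)
  have hv := card_eq_sum_card_fiberwise (f := v) (s := E) (t := S)
    fun c hc => mem_union_right _ (mem_image_of_mem v hc)
  have hdeg₂ : ∀ n ∈ S, 2 ≤ #{c ∈ E | u c = n} + #{c ∈ E | v c = n} := by
    intro n hn
    have : 0 < #{c ∈ E | u c = n} + #{c ∈ E | v c = n} := by
      rcases mem_union.1 hn with h | h <;> obtain ⟨c, hc, rfl⟩ := mem_image.1 h
      · exact Nat.add_pos_left (card_pos.2 ⟨c, by simp [hc]⟩) _
      · exact Nat.add_pos_right _ (card_pos.2 ⟨c, by simp [hc]⟩)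
    have := hdeg n
    omega
  have := sum_le_sum hdeg₂
  rw [sum_add_distrib, ← hu, ← hv, sum_const, smul_eq_mul] at this
  omega

theorem not_linearIndependent_indicator_Ico (huv : ∀ c ∈ E, u c ≤ v c) (hE : E.Nonempty)
    (hS : #(E.image u ∪ E.image v) ≤ #E) :
    ¬ LinearIndependent ℝ fun (c : E) (k : ℕ) => if u c ≤ k ∧ k < v c then (1 : ℝ) else 0 := by
  classical
  obtain ⟨c₀, hc₀⟩ := hE
  set S := E.image u ∪ E.image v
  have hu₀ : u c₀ ∈ S := mem_union_left _ (mem_image_of_mem u hc₀)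
  -- each indicator of `[u c, v c)` is a difference of two prefix indicators, so all of them
  -- lie in a span of `#S - 1` vectors
  let P : ℕ → ℕ → ℝ := fun n k => if k < n then 1 else 0
  let G : Finset (ℕ → ℝ) := (S.erase (u c₀)).image fun n => P n - P (u c₀)
  have hP : ∀ n ∈ S, P n - P (u c₀) ∈ Submodule.span ℝ (G : Set (ℕ → ℝ)) := by
    intro n hn
    by_cases h : n = u c₀
    · simp [h]
    · exact Submodule.subset_span (mem_coe.2 (mem_image_of_mem _ (mem_erase.2 ⟨h, hn⟩)))
  have hspan : Submodule.span ℝ (Set.range fun (c : E) (k : ℕ) =>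
      if u c ≤ k ∧ k < v c then (1 : ℝ) else 0) ≤ Submodule.span ℝ (G : Set (ℕ → ℝ)) := by
    rw [Submodule.span_le]
    rintro _ ⟨c, rfl⟩
    have hc : (fun k => if u c ≤ k ∧ k < v c then (1 : ℝ) else 0) =
        (P (v c) - P (u c₀)) - (P (u c) - P (u c₀)) := by
      ext k
      have := huv c c.2
      simp only [P, Pi.sub_apply]
      split_ifs <;> first | (exfalso; omega) | ring
    rw [SetLike.mem_coe]
    beta_reduce
    rw [hc]
    exact sub_mem (hP _ (mem_union_right _ (mem_image_of_mem v c.2)))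
      (hP _ (mem_union_left _ (mem_image_of_mem u c.2)))
  intro hli
  have h1 := finrank_span_eq_card hli
  have h2 := Submodule.finrank_mono hspan
  have h3 := finrank_span_finset_le_card (R := ℝ) G
  have h4 : #G ≤ #(S.erase (u c₀)) := card_image_le
  have h5 : #(S.erase (u c₀)) = #S - 1 := card_erase_of_mem hu₀
  have h6 : 0 < #S := card_pos.2 ⟨_, hu₀⟩
  rw [Fintype.card_coe] at h1
  unfold Set.finrank at h3
  omega

theorem exists_ne_zero_coverage_eq_zero_of_card_endpoints_le (huv : ∀ c ∈ E, u c ≤ v c)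
    (hE : E.Nonempty) (hS : #(E.image u ∪ E.image v) ≤ #E) :
    ∃ g : ι → ℝ, (∃ c ∈ E, g c ≠ 0) ∧ ∀ k, ∑ c ∈ E with u c ≤ k ∧ k < v c, g c = 0 := by
  classical
  obtain ⟨g, hg, c, hc⟩ :=
    Fintype.not_linearIndependent_iff.1 (not_linearIndependent_indicator_Ico E u v huv hE hS)
  refine ⟨fun i => if h : i ∈ E then g ⟨i, h⟩ else 0, ⟨c, c.2, by simpa using hc⟩, fun k => ?_⟩
  have := congr_fun hg k
  simp only [Finset.sum_apply, Pi.smul_apply, smul_eq_mul, mul_ite, mul_one, mul_zero,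
    Pi.zero_apply] at this
  rw [← this, sum_filter, ← sum_coe_sort E]
  exact sum_congr rfl fun c _ => by simp

theorem card_endpoints_ne_one_of_coverage_int (huv : ∀ c ∈ E, u c ≤ v c) (f : ι → ℝ)
    (hf : ∀ c ∈ E, Int.fract (f c) ≠ 0)
    (hcov : ∀ k, ∃ z : ℤ, ∑ c ∈ E with u c ≤ k ∧ k < v c, f c = z) (n : ℕ) :
    #{c ∈ E | u c = n} + #{c ∈ E | v c = n} ≠ 1 := by
  classical
  have hA : ∀ m, ∃ z : ℤ, ∑ c ∈ E with u c < m, f c - ∑ c ∈ E with v c < m, f c = z := by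
    rintro (_ | k)
    · exact ⟨0, by simp⟩
    · obtain ⟨z, hz⟩ := hcov k
      refine ⟨z, ?_⟩
      rw [← hz, sum_filter, sum_filter, sum_filter, ← sum_sub_distrib]
      refine sum_congr rfl fun c hc => ?_
      have := huv c hc
      split_ifs <;> first | (exfalso; omega) | ring
  -- the coverage just after `n` minus the coverage just before `n` is the signed weight of the
  -- intervals with an endpoint at `n`
  have hD : ∃ z : ℤ, ∑ c ∈ E with u c = n, f c - ∑ c ∈ E with v c = n, f c = z := by
    obtain ⟨z₁, hz₁⟩ := hA (n + 1)
    obtain ⟨z₀, hz₀⟩ := hA n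
    refine ⟨z₁ - z₀, ?_⟩
    push_cast
    rw [← hz₁, ← hz₀]
    simp only [sum_filter]
    rw [← sum_sub_distrib, ← sum_sub_distrib, ← sum_sub_distrib, ← sum_sub_distrib]
    refine sum_congr rfl fun c _ => ?_
    split_ifs <;> first | (exfalso; omega) | ring
  intro h1
  obtain ⟨z, hz⟩ := hD
  rcases Nat.add_eq_one_iff.1 h1 with ⟨hu, hv⟩ | ⟨hu, hv⟩
  · obtain ⟨c, hc⟩ := card_eq_one.1 hv
    rw [card_eq_zero.1 hu, hc, sum_empty, sum_singleton, zero_sub] at hz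
    exact hf c (mem_filter.1 (hc ▸ mem_singleton_self c)).1
      (Int.fract_neg_eq_zero.1 (by rw [hz, Int.fract_intCast]))
  · obtain ⟨c, hc⟩ := card_eq_one.1 hu
    rw [card_eq_zero.1 hv, hc, sum_empty, sum_singleton, sub_zero] at hz
    exact hf c (mem_filter.1 (hc ▸ mem_singleton_self c)).1 (by rw [hz, Int.fract_intCast])

theorem exists_ne_zero_coverage_eq_zero (huv : ∀ c ∈ E, u c ≤ v c) (f : ι → ℝ)
    (hf : ∀ c ∈ E, Int.fract (f c) ≠ 0)
    (hcov : ∀ k, ∃ z : ℤ, ∑ c ∈ E with u c ≤ k ∧ k < v c, f c = z) (hE : E.Nonempty) :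
    ∃ g : ι → ℝ, (∃ c ∈ E, g c ≠ 0) ∧ ∀ k, ∑ c ∈ E with u c ≤ k ∧ k < v c, g c = 0 :=
  exists_ne_zero_coverage_eq_zero_of_card_endpoints_le E u v huv hE
    (card_endpoints_le_of_forall_ne_one E u v
      (card_endpoints_ne_one_of_coverage_int E u v huv f hf hcov))

end IntervalFamily

namespace FracSchedule

variable {B N H : ℕ} {σ : ℕ → ℕ → ℕ} {q : ℕ → ℕ → ℝ}

theorem eq_zero_of_le (hq : FracSchedule B N σ q) (hH : ∀ t j, H ≤ t → q t j = 0) {t j : ℕ}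
    (h : H ≤ t ∨ N ≤ j) : q t j = 0 :=
  h.elim (hH t j) (hq.2.1 t j)

theorem truncate (hq : FracSchedule B N σ q) (H : ℕ) :
    FracSchedule B N σ fun t j => if t < H then q t j else 0 := by
  refine ⟨fun t j => ?_, fun t j hj => ?_, fun t => ?_, fun j => ?_, fun t j => ?_⟩ <;>
    dsimp only
  · split_ifs
    exacts [hq.1 t j, le_rfl]
  · rw [hq.2.1 t j hj, ite_self]
  · split_ifs
    exacts [hq.2.2.1 t, by simp]
  · split_ifs
    exacts [hq.2.2.2.1 j, Nat.cast_nonneg _]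
  · split_ifs with h₁ h₂
    · exact hq.2.2.2.2 t j
    · omega
    · positivity
    · positivity

theorem fracValue_truncate :
    fracValue B N T (fun t j => if t < T + B + 1 then q t j else 0) = fracValue B N T q :=
  sum_congr rfl fun t ht => by simp [mem_range.1 ht]

def Linked (σ : ℕ → ℕ → ℕ) (q : ℕ → ℕ → ℝ) (t j : ℕ) : Prop :=
  q (t + 1) j = max (q t j - 1) 0 + σ (t + 1) j ∧ 1 < q t j

open Classical in
noncomputable def chainStart (σ : ℕ → ℕ → ℕ) (q : ℕ → ℕ → ℝ) (j : ℕ) : ℕ → ℕ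
  | 0 => 0
  | t + 1 => if Linked σ q t j then chainStart σ q j t else t + 1

noncomputable def chainEnd (σ : ℕ → ℕ → ℕ) (q : ℕ → ℕ → ℝ) (j c : ℕ) : ℕ :=
  sInf {s | c ≤ s ∧ ¬ Linked σ q s j}

section Chains

variable {j c r s t : ℕ}

theorem Linked.fract_eq (h : Linked σ q t j) : Int.fract (q (t + 1) j) = Int.fract (q t j) := by
  rw [h.1, max_eq_left (by linarith [h.2]),
    show q t j - 1 + (σ (t + 1) j : ℝ) = q t j + ((σ (t + 1) j - 1 : ℤ) : ℝ) by push_cast; ring,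
    Int.fract_add_intCast]

theorem chainStart_succ_of_linked (h : Linked σ q t j) :
    chainStart σ q j (t + 1) = chainStart σ q j t := by
  rw [chainStart, if_pos h]

theorem chainStart_succ_of_not_linked (h : ¬ Linked σ q t j) :
    chainStart σ q j (t + 1) = t + 1 := by
  rw [chainStart, if_neg h]

theorem chainStart_le (j t : ℕ) : chainStart σ q j t ≤ t := by
  induction t with
  | zero => exact le_rfl
  | succ t ih =>
    by_cases h : Linked σ q t j
    · rw [chainStart_succ_of_linked h]
      omega
    · rw [chainStart_succ_of_not_linked h]

theorem linked_of_chainStart_le (hs : chainStart σ q j t ≤ s) (hst : s < t) : Linked σ q s j := by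
  induction t with
  | zero => omega
  | succ t ih =>
    by_cases h : Linked σ q t j
    · rw [chainStart_succ_of_linked h] at hs
      rcases Nat.lt_succ_iff_lt_or_eq.1 hst with hlt | rfl
      · exact ih hs hlt
      · exact h
    · rw [chainStart_succ_of_not_linked h] at hs
      omega

theorem chainStart_chainStart (j t : ℕ) :
    chainStart σ q j (chainStart σ q j t) = chainStart σ q j t := by
  induction t with
  | zero => rfl
  | succ t ih =>
    by_cases h : Linked σ q t j
    · rw [chainStart_succ_of_linked h, ih]
    · rw [chainStart_succ_of_not_linked h, chainStart_succ_of_not_linked h]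

theorem chainStart_eq_of_forall_linked (hc : chainStart σ q j c = c) (hcr : c ≤ r)
    (hl : ∀ s, c ≤ s → s < r → Linked σ q s j) : chainStart σ q j r = c := by
  induction r, hcr using Nat.le_induction with
  | base => exact hc
  | succ r hcr ih =>
    rw [chainStart_succ_of_linked (hl r hcr r.lt_succ_self),
      ih fun s h1 h2 => hl s h1 (h2.trans r.lt_succ_self)]

theorem fract_eq_of_forall_linked (hcr : c ≤ r) (hl : ∀ s, c ≤ s → s < r → Linked σ q s j) :
    Int.fract (q r j) = Int.fract (q c j) := by
  induction r, hcr using Nat.le_induction with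
  | base => rfl
  | succ r hcr ih =>
    rw [(hl r hcr r.lt_succ_self).fract_eq, ih fun s h1 h2 => hl s h1 (h2.trans r.lt_succ_self)]

theorem chainStart_eq_iff (hc : chainStart σ q j c = c) :
    chainStart σ q j r = c ↔ c ≤ r ∧ ∀ s, c ≤ s → s < r → Linked σ q s j :=
  ⟨fun h => h ▸ ⟨chainStart_le j r, fun _ hs hsr => linked_of_chainStart_le hs hsr⟩,
    fun h => chainStart_eq_of_forall_linked hc h.1 h.2⟩

theorem fract_chainStart (j t : ℕ) : Int.fract (q (chainStart σ q j t) j) = Int.fract (q t j) :=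
  (fract_eq_of_forall_linked (chainStart_le j t) fun _ hs hst =>
    linked_of_chainStart_le hs hst).symm

theorem forall_linked_iff_le_chainEnd (hH : ∀ t j, H ≤ t → q t j = 0) :
    (∀ s, c ≤ s → s < r → Linked σ q s j) ↔ r ≤ chainEnd σ q j c := by
  have hne : {s | c ≤ s ∧ ¬ Linked σ q s j}.Nonempty :=
    ⟨max c H, le_max_left _ _, fun h => by linarith [h.2, hH _ j (le_max_right c H)]⟩
  constructor
  · intro h
    by_contra hlt
    obtain ⟨h1, h2⟩ := Nat.sInf_mem hne
    exact h2 (h _ h1 (not_le.1 hlt))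
  · intro h s hcs hsr
    by_contra hl
    have : chainEnd σ q j c ≤ s := Nat.sInf_le ⟨hcs, hl⟩
    omega

theorem le_chainEnd (hH : ∀ t j, H ≤ t → q t j = 0) : c ≤ chainEnd σ q j c :=
  (forall_linked_iff_le_chainEnd hH).1 fun _ h1 h2 => absurd h2 (not_lt.2 h1)

end Chains

open Classical in
noncomputable def fracCoords (N H : ℕ) (q : ℕ → ℕ → ℝ) : Finset (ℕ × ℕ) :=
  (range H ×ˢ range N).filter fun p => Int.fract (q p.1 p.2) ≠ 0

noncomputable def fracChains (N H : ℕ) (σ : ℕ → ℕ → ℕ) (q : ℕ → ℕ → ℝ) : Finset (ℕ × ℕ) :=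
  (fracCoords N H q).image fun p => (chainStart σ q p.2 p.1, p.2)

open Classical in
noncomputable def fullCount (B N : ℕ) (q : ℕ → ℕ → ℝ) : ℕ → ℕ :=
  Nat.count fun r => ∑ j ∈ range N, q r j = B

structure IsAdmissibleDir (B N : ℕ) (σ : ℕ → ℕ → ℕ) (q d : ℕ → ℕ → ℝ) : Prop where
  eq_zero_of_fract_eq_zero : ∀ t j, Int.fract (q t j) = 0 → d t j = 0
  linked : ∀ t j, Linked σ q t j → d (t + 1) j = d t j
  sum_eq_zero : ∀ t, ∑ j ∈ range N, q t j = B → ∑ j ∈ range N, d t j = 0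

section Directions

variable {c : ℕ × ℕ} {j r t : ℕ}

theorem mem_fracCoords (hq : FracSchedule B N σ q) (hH : ∀ t j, H ≤ t → q t j = 0) :
    (t, j) ∈ fracCoords N H q ↔ Int.fract (q t j) ≠ 0 := by
  simp only [fracCoords, mem_filter, mem_product, mem_range]
  refine ⟨fun h => h.2, fun h => ⟨⟨?_, ?_⟩, h⟩⟩ <;> by_contra hc <;>
    exact h (by rw [hq.eq_zero_of_le hH (by omega), Int.fract_zero])

theorem of_mem_fracChains (hc : c ∈ fracChains N H σ q) :
    chainStart σ q c.2 c.1 = c.1 ∧ Int.fract (q c.1 c.2) ≠ 0 ∧ c.2 < N := by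
  obtain ⟨⟨t, j⟩, hp, rfl⟩ := mem_image.1 hc
  simp only [fracCoords, mem_filter, mem_product, mem_range] at hp
  exact ⟨chainStart_chainStart j t, by rw [fract_chainStart]; exact hp.2, hp.1.2⟩

theorem sum_fracCoords_eq_sum_fracChains (hq : FracSchedule B N σ q)
    (hH : ∀ t j, H ≤ t → q t j = 0) (φ : ℕ × ℕ → ℝ) (r : ℕ) :
    ∑ j ∈ range N with Int.fract (q r j) ≠ 0, φ (chainStart σ q j r, j) =
      ∑ c ∈ fracChains N H σ q with chainStart σ q c.2 r = c.1, φ c := by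
  refine sum_nbij' (fun j => (chainStart σ q j r, j)) Prod.snd (fun j hj => ?_) (fun c hc => ?_)
    (fun _ _ => rfl) (fun c hc => Prod.ext (mem_filter.1 hc).2 rfl) (fun _ _ => rfl)
  · obtain ⟨-, hj⟩ := mem_filter.1 hj
    exact mem_filter.2 ⟨mem_image.2 ⟨(r, j), (mem_fracCoords hq hH).2 hj, rfl⟩, rfl⟩
  · obtain ⟨hcC, hcr⟩ := mem_filter.1 hc
    obtain ⟨-, hfr, hN⟩ := of_mem_fracChains hcC
    refine mem_filter.2 ⟨mem_range.2 hN, ?_⟩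
    rwa [← fract_chainStart (σ := σ) c.2 r, hcr]

theorem chainStart_eq_iff_fullCount (hH : ∀ t j, H ≤ t → q t j = 0) {c : ℕ}
    (hc : chainStart σ q j c = c) (hr : ∑ j ∈ range N, q r j = B) :
    chainStart σ q j r = c ↔ fullCount B N q c ≤ fullCount B N q r ∧
      fullCount B N q r < fullCount B N q (chainEnd σ q j c + 1) := by
  unfold fullCount
  rw [chainStart_eq_iff hc, forall_linked_iff_le_chainEnd hH, Nat.count_le_count_iff_le hr,
    Nat.count_lt_count_iff_lt hr, Nat.lt_succ_iff]

theorem exists_int_sum_fract_fracChains (hq : FracSchedule B N σ q)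
    (hH : ∀ t j, H ≤ t → q t j = 0) (k : ℕ) :
    ∃ z : ℤ, ∑ c ∈ fracChains N H σ q with fullCount B N q c.1 ≤ k ∧
      k < fullCount B N q (chainEnd σ q c.2 c.1 + 1), Int.fract (q c.1 c.2) = z := by
  by_cases hk : ∃ r, ∑ j ∈ range N, q r j = B ∧ fullCount B N q r = k
  · obtain ⟨r, hr, rfl⟩ := hk
    refine ⟨B - ∑ j ∈ range N, ⌊q r j⌋, ?_⟩
    rw [← filter_congr fun c hc => chainStart_eq_iff_fullCount hH (of_mem_fracChains hc).1 hr,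
      ← sum_fracCoords_eq_sum_fracChains hq hH (fun c => Int.fract (q c.1 c.2)) r]
    simp only [fract_chainStart]
    rw [sum_filter_ne_zero]
    simp only [← Int.self_sub_floor, sum_sub_distrib, hr]
    push_cast
    rfl
  · refine ⟨0, ?_⟩
    rw [Int.cast_zero]
    refine sum_eq_zero fun c hc => absurd ?_ hk
    exact Nat.exists_count_eq_of_lt_count (mem_filter.1 hc).2.2

theorem exists_isAdmissibleDir (hq : FracSchedule B N σ q) (hH : ∀ t j, H ≤ t → q t j = 0)
    (hF : (fracCoords N H q).Nonempty) : ∃ d, IsAdmissibleDir B N σ q d ∧ ∃ t j, d t j ≠ 0 := by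
  classical
  obtain ⟨g, ⟨c, hcC, hgc⟩, hg⟩ := exists_ne_zero_coverage_eq_zero (fracChains N H σ q)
    (fun c => fullCount B N q c.1) (fun c => fullCount B N q (chainEnd σ q c.2 c.1 + 1))
    (fun c _ => Nat.count_monotone _ ((le_chainEnd hH).trans (Nat.le_succ _)))
    (fun c => Int.fract (q c.1 c.2))
    (fun c hc => by rw [Int.fract_fract]; exact (of_mem_fracChains hc).2.1)
    (exists_int_sum_fract_fracChains hq hH) (hF.image _)
  refine ⟨fun t j => if Int.fract (q t j) = 0 then 0 else g (chainStart σ q j t, j),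
    ⟨fun t j h => if_pos h, fun t j h => ?_, fun r hr => ?_⟩, c.1, c.2, ?_⟩
  · simp only [h.fract_eq, chainStart_succ_of_linked h]
  · refine Eq.trans ?_ (hg (fullCount B N q r))
    rw [← filter_congr fun c hc => chainStart_eq_iff_fullCount hH (of_mem_fracChains hc).1 hr,
      ← sum_fracCoords_eq_sum_fracChains hq hH g r, sum_filter]
    exact sum_congr rfl fun j _ => by split_ifs <;> simp_all
  · obtain ⟨hroot, hfr, -⟩ := of_mem_fracChains hcC
    simpa [hfr, hroot] using hgc

theorem IsAdmissibleDir.neg {d : ℕ → ℕ → ℝ} (hd : IsAdmissibleDir B N σ q d) :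
    IsAdmissibleDir B N σ q (-d) where
  eq_zero_of_fract_eq_zero t j h := by simp [hd.eq_zero_of_fract_eq_zero t j h]
  linked t j h := by simp [hd.linked t j h]
  sum_eq_zero t h := by simp [sum_neg_distrib, hd.sum_eq_zero t h]

theorem IsAdmissibleDir.eq_zero_of_le {d : ℕ → ℕ → ℝ} (hd : IsAdmissibleDir B N σ q d)
    (hq : FracSchedule B N σ q) (hH : ∀ t j, H ≤ t → q t j = 0) (h : H ≤ t ∨ N ≤ j) :
    d t j = 0 :=
  hd.eq_zero_of_fract_eq_zero t j (by rw [hq.eq_zero_of_le hH h, Int.fract_zero])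

end Directions

def bufferSlack (B N : ℕ) (q : ℕ → ℕ → ℝ) (t : ℕ) : ℝ := B - ∑ j ∈ range N, q t j

def stepSlack (σ : ℕ → ℕ → ℕ) (q : ℕ → ℕ → ℝ) (t j : ℕ) : ℝ :=
  max (q t j - 1) 0 + σ (t + 1) j - q (t + 1) j

noncomputable def stepSlope (q d : ℕ → ℕ → ℝ) (t j : ℕ) : ℝ :=
  (if 1 < q t j then d t j else 0) - d (t + 1) j

open Classical in
noncomputable def slackTimes (B N H : ℕ) (q : ℕ → ℕ → ℝ) : Finset ℕ :=
  (range H).filter fun t => bufferSlack B N q t ≠ 0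

open Classical in
noncomputable def slackSteps (N H : ℕ) (σ : ℕ → ℕ → ℕ) (q : ℕ → ℕ → ℝ) : Finset (ℕ × ℕ) :=
  (range H ×ˢ range N).filter fun p => stepSlack σ q p.1 p.2 ≠ 0

-- Pairs (slack at `q`, rate of change along `d`). The first two families keep every coordinate
-- between its floor and ceiling, where `min · 1` and `max (· - 1) 0` are affine.
open Classical in
noncomputable def moveSlacks (B N H : ℕ) (σ : ℕ → ℕ → ℕ) (q d : ℕ → ℕ → ℝ) : Finset (ℝ × ℝ) :=
  ((fracCoords N H q).image fun p => (q p.1 p.2 - ⌊q p.1 p.2⌋, d p.1 p.2)) ∪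
  ((fracCoords N H q).image fun p => (⌈q p.1 p.2⌉ - q p.1 p.2, -d p.1 p.2)) ∪
  ((range H).image fun t => (bufferSlack B N q t, -∑ j ∈ range N, d t j)) ∪
  ((range H ×ˢ range N).image fun p => (stepSlack σ q p.1 p.2, stepSlope q d p.1 p.2))

noncomputable def potential (B N H : ℕ) (σ : ℕ → ℕ → ℕ) (q : ℕ → ℕ → ℝ) : ℕ :=
  #(fracCoords N H q) + #(slackTimes B N H q) + #(slackSteps N H σ q)

section Step

variable {d : ℕ → ℕ → ℝ} {δ : ℝ} {t j : ℕ}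

theorem bufferSlack_add_smul :
    bufferSlack B N (q + δ • d) t = bufferSlack B N q t + δ * -∑ j ∈ range N, d t j := by
  simp only [bufferSlack, Pi.add_apply, Pi.smul_apply, smul_eq_mul, sum_add_distrib, ← mul_sum]
  ring

theorem stepSlack_add_smul (hlo : (⌊q t j⌋ : ℝ) ≤ q t j + δ * d t j)
    (hhi : q t j + δ * d t j ≤ ⌈q t j⌉) :
    stepSlack σ (q + δ • d) t j = stepSlack σ q t j + δ * stepSlope q d t j := by
  simp only [stepSlack, stepSlope, Pi.add_apply, Pi.smul_apply, smul_eq_mul]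
  rw [max_add_sub_one_zero_of_floor_le_of_le_ceil hlo hhi]
  split_ifs <;> ring

theorem IsAdmissibleDir.stepSlope_eq_zero (hd : IsAdmissibleDir B N σ q d)
    (h : stepSlack σ q t j = 0) : stepSlope q d t j = 0 := by
  unfold stepSlack at h
  unfold stepSlope
  split_ifs with h1
  · rw [hd.linked t j ⟨by linarith, h1⟩, sub_self]
  · rw [max_eq_right (by linarith)] at h
    rw [hd.eq_zero_of_fract_eq_zero (t + 1) j (by rw [show q (t + 1) j = σ (t + 1) j by linarith,
      Int.fract_natCast]), sub_self]

theorem fracCoords_add_smul_subset (hd : IsAdmissibleDir B N σ q d) :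
    fracCoords N H (q + δ • d) ⊆ fracCoords N H q := by
  intro p hp
  simp only [fracCoords, mem_filter, Pi.add_apply, Pi.smul_apply, smul_eq_mul] at hp ⊢
  refine ⟨hp.1, fun h0 => hp.2 ?_⟩
  rwa [hd.eq_zero_of_fract_eq_zero _ _ h0, mul_zero, add_zero]

theorem slackTimes_add_smul_subset (hd : IsAdmissibleDir B N σ q d) :
    slackTimes B N H (q + δ • d) ⊆ slackTimes B N H q := by
  intro t ht
  simp only [slackTimes, mem_filter] at ht ⊢
  refine ⟨ht.1, fun h0 => ht.2 ?_⟩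
  rw [bufferSlack_add_smul, h0, hd.sum_eq_zero t (by rw [bufferSlack] at h0; linarith)]
  ring

theorem slackSteps_add_smul_subset (hd : IsAdmissibleDir B N σ q d)
    (hbr : ∀ t j, (⌊q t j⌋ : ℝ) ≤ q t j + δ * d t j ∧ q t j + δ * d t j ≤ ⌈q t j⌉) :
    slackSteps N H σ (q + δ • d) ⊆ slackSteps N H σ q := by
  intro p hp
  simp only [slackSteps, mem_filter] at hp ⊢
  refine ⟨hp.1, fun h0 => hp.2 ?_⟩
  rw [stepSlack_add_smul (hbr _ _).1 (hbr _ _).2, h0, hd.stepSlope_eq_zero h0]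
  ring

theorem sub_floor_pos_of_mem_fracCoords {p : ℕ × ℕ} (hp : p ∈ fracCoords N H q) :
    0 < q p.1 p.2 - ⌊q p.1 p.2⌋ := by
  rw [Int.self_sub_floor]
  exact (Int.fract_nonneg _).lt_of_ne' (mem_filter.1 hp).2

theorem ceil_sub_pos_of_mem_fracCoords {p : ℕ × ℕ} (hp : p ∈ fracCoords N H q) :
    0 < ⌈q p.1 p.2⌉ - q p.1 p.2 := by
  rw [Int.ceil_eq_add_one_sub_fract (mem_filter.1 hp).2]
  linarith [Int.fract_lt_one (q p.1 p.2)]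

section MoveSlacks

variable {p : ℕ × ℕ} {x : ℝ × ℝ}

theorem sub_floor_mem_moveSlacks (hp : p ∈ fracCoords N H q) :
    (q p.1 p.2 - ⌊q p.1 p.2⌋, d p.1 p.2) ∈ moveSlacks B N H σ q d :=
  mem_union_left _ (mem_union_left _ (mem_union_left _ (mem_image_of_mem _ hp)))

theorem ceil_sub_mem_moveSlacks (hp : p ∈ fracCoords N H q) :
    (⌈q p.1 p.2⌉ - q p.1 p.2, -d p.1 p.2) ∈ moveSlacks B N H σ q d :=
  mem_union_left _ (mem_union_left _ (mem_union_right _ (mem_image_of_mem _ hp)))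

theorem bufferSlack_mem_moveSlacks (ht : t < H) :
    (bufferSlack B N q t, -∑ j ∈ range N, d t j) ∈ moveSlacks B N H σ q d :=
  mem_union_left _ (mem_union_right _ (mem_image_of_mem _ (mem_range.2 ht)))

theorem stepSlack_mem_moveSlacks (ht : t < H) (hj : j < N) :
    (stepSlack σ q t j, stepSlope q d t j) ∈ moveSlacks B N H σ q d :=
  mem_union_right _ (mem_image.2 ⟨(t, j), mem_product.2 ⟨mem_range.2 ht, mem_range.2 hj⟩, rfl⟩)

theorem mem_moveSlacks :
    x ∈ moveSlacks B N H σ q d ↔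
      (∃ p ∈ fracCoords N H q, (q p.1 p.2 - ⌊q p.1 p.2⌋, d p.1 p.2) = x) ∨
      (∃ p ∈ fracCoords N H q, (⌈q p.1 p.2⌉ - q p.1 p.2, -d p.1 p.2) = x) ∨
      (∃ t ∈ range H, (bufferSlack B N q t, -∑ j ∈ range N, d t j) = x) ∨
      ∃ p ∈ range H ×ˢ range N, (stepSlack σ q p.1 p.2, stepSlope q d p.1 p.2) = x := by
  simp only [moveSlacks, mem_union, mem_image, or_assoc]

theorem fst_nonneg_of_mem_moveSlacks (hq : FracSchedule B N σ q)
    (hx : x ∈ moveSlacks B N H σ q d) : 0 ≤ x.1 := by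
  rcases mem_moveSlacks.1 hx with ⟨p, hp, rfl⟩ | ⟨p, hp, rfl⟩ | ⟨t, -, rfl⟩ | ⟨p, -, rfl⟩
  · exact (sub_floor_pos_of_mem_fracCoords hp).le
  · exact (ceil_sub_pos_of_mem_fracCoords hp).le
  · exact sub_nonneg.2 (hq.2.2.1 t)
  · exact sub_nonneg.2 (hq.2.2.2.2 p.1 p.2)

theorem IsAdmissibleDir.snd_eq_zero_of_mem_moveSlacks (hd : IsAdmissibleDir B N σ q d)
    (hx : x ∈ moveSlacks B N H σ q d) (hx0 : x.1 = 0) : x.2 = 0 := by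
  rcases mem_moveSlacks.1 hx with ⟨p, hp, rfl⟩ | ⟨p, hp, rfl⟩ | ⟨t, -, rfl⟩ | ⟨p, -, rfl⟩
  · exact absurd hx0 (sub_floor_pos_of_mem_fracCoords hp).ne'
  · exact absurd hx0 (ceil_sub_pos_of_mem_fracCoords hp).ne'
  · dsimp only [bufferSlack] at hx0 ⊢
    rw [hd.sum_eq_zero t (by linarith), neg_zero]
  · exact hd.stepSlope_eq_zero hx0

theorem exists_mem_moveSlacks_snd_neg (hq : FracSchedule B N σ q)
    (hH : ∀ t j, H ≤ t → q t j = 0) (hd : IsAdmissibleDir B N σ q d) (hne : ∃ t j, d t j ≠ 0) :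
    ∃ x ∈ moveSlacks B N H σ q d, x.2 < 0 := by
  obtain ⟨t, j, h⟩ := hne
  have hp : (t, j) ∈ fracCoords N H q :=
    (mem_fracCoords hq hH).2 fun h0 => h (hd.eq_zero_of_fract_eq_zero t j h0)
  rcases h.lt_or_gt with h | h
  · exact ⟨_, sub_floor_mem_moveSlacks hp, h⟩
  · exact ⟨_, ceil_sub_mem_moveSlacks hp, neg_lt_zero.2 h⟩

theorem floor_le_add_smul_le_ceil (hq : FracSchedule B N σ q) (hH : ∀ t j, H ≤ t → q t j = 0)
    (hd : IsAdmissibleDir B N σ q d)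
    (hall : ∀ x ∈ moveSlacks B N H σ q d, 0 ≤ x.1 + δ * x.2) (t j : ℕ) :
    (⌊q t j⌋ : ℝ) ≤ q t j + δ * d t j ∧ q t j + δ * d t j ≤ ⌈q t j⌉ := by
  by_cases h0 : Int.fract (q t j) = 0
  · rw [hd.eq_zero_of_fract_eq_zero t j h0, mul_zero, add_zero]
    exact ⟨Int.floor_le _, Int.le_ceil _⟩
  · have hp : (t, j) ∈ fracCoords N H q := (mem_fracCoords hq hH).2 h0
    have h₁ := hall _ (sub_floor_mem_moveSlacks hp)
    have h₂ := hall _ (ceil_sub_mem_moveSlacks hp)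
    dsimp only at h₁ h₂
    constructor <;> linarith

theorem add_smul_of_moveSlacks (hq : FracSchedule B N σ q) (hH : ∀ t j, H ≤ t → q t j = 0)
    (hd : IsAdmissibleDir B N σ q d)
    (hall : ∀ x ∈ moveSlacks B N H σ q d, 0 ≤ x.1 + δ * x.2) : FracSchedule B N σ (q + δ • d) := by
  have hbr := floor_le_add_smul_le_ceil hq hH hd hall
  have hdz : ∀ t j, H ≤ t ∨ N ≤ j → d t j = 0 := fun t j h => hd.eq_zero_of_le hq hH h
  refine ⟨fun t j => ?_, fun t j hj => ?_, fun t => ?_, fun j => ?_, fun t j => ?_⟩ <;>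
    simp only [Pi.add_apply, Pi.smul_apply, smul_eq_mul]
  · exact (by exact_mod_cast Int.floor_nonneg.2 (hq.1 t j) : (0 : ℝ) ≤ ⌊q t j⌋).trans (hbr t j).1
  · rw [hq.2.1 t j hj, hdz t j (Or.inr hj), mul_zero, add_zero]
  · by_cases ht : t < H
    · have := hall _ (bufferSlack_mem_moveSlacks ht)
      dsimp only [bufferSlack] at this
      rw [sum_add_distrib, ← mul_sum]
      linarith
    · simp only [hdz t _ (Or.inl (not_lt.1 ht)), mul_zero, add_zero]
      exact hq.2.2.1 t
  · exact (hbr 0 j).2.trans (by exact_mod_cast Int.ceil_le.2 (by exact_mod_cast hq.2.2.2.1 j))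
  · by_cases h : t < H ∧ j < N
    · have := hall _ (stepSlack_mem_moveSlacks h.1 h.2)
      dsimp only at this
      rw [← stepSlack_add_smul (hbr t j).1 (hbr t j).2, stepSlack] at this
      simp only [Pi.add_apply, Pi.smul_apply, smul_eq_mul] at this
      linarith
    · rw [hdz t j (by omega), hdz (t + 1) j (by omega)]
      simpa using hq.2.2.2.2 t j

theorem potential_add_smul_lt (hq : FracSchedule B N σ q) (hH : ∀ t j, H ≤ t → q t j = 0)
    (hd : IsAdmissibleDir B N σ q d)
    (hall : ∀ x ∈ moveSlacks B N H σ q d, 0 ≤ x.1 + δ * x.2)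
    (hhit : ∃ x ∈ moveSlacks B N H σ q d, 0 < x.1 ∧ x.1 + δ * x.2 = 0) :
    potential B N H σ (q + δ • d) < potential B N H σ q := by
  have hbr := floor_le_add_smul_le_ceil hq hH hd hall
  have hF := fracCoords_add_smul_subset (H := H) (δ := δ) hd
  have hT := slackTimes_add_smul_subset (H := H) (δ := δ) hd
  have hS := slackSteps_add_smul_subset (H := H) hd hbr
  refine card_add_card_add_card_lt hF hT hS ?_
  obtain ⟨x, hx, hx0, hxδ⟩ := hhit
  rcases mem_moveSlacks.1 hx with ⟨p, hp, rfl⟩ | ⟨p, hp, rfl⟩ | ⟨t, ht, rfl⟩ | ⟨p, hp, rfl⟩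
  all_goals dsimp only at hx0 hxδ
  · refine Or.inl ((ssubset_iff_of_subset hF).2 ⟨p, hp, fun hp' => (mem_filter.1 hp').2 ?_⟩)
    simp [show q p.1 p.2 + δ * d p.1 p.2 = ⌊q p.1 p.2⌋ by linarith]
  · refine Or.inl ((ssubset_iff_of_subset hF).2 ⟨p, hp, fun hp' => (mem_filter.1 hp').2 ?_⟩)
    simp [show q p.1 p.2 + δ * d p.1 p.2 = ⌈q p.1 p.2⌉ by linarith]
  · refine Or.inr (Or.inl ((ssubset_iff_of_subset hT).2
      ⟨t, mem_filter.2 ⟨ht, hx0.ne'⟩, fun ht' => (mem_filter.1 ht').2 ?_⟩))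
    rwa [bufferSlack_add_smul]
  · refine Or.inr (Or.inr ((ssubset_iff_of_subset hS).2
      ⟨p, mem_filter.2 ⟨hp, hx0.ne'⟩, fun hp' => (mem_filter.1 hp').2 ?_⟩))
    rwa [stepSlack_add_smul (hbr _ _).1 (hbr _ _).2]

end MoveSlacks

theorem sum_min_add_smul
    (hbr : ∀ t j, (⌊q t j⌋ : ℝ) ≤ q t j + δ * d t j ∧ q t j + δ * d t j ≤ ⌈q t j⌉) :
    ∑ t ∈ range H, ∑ j ∈ range N, min ((q + δ • d) t j) 1 =
      ∑ t ∈ range H, ∑ j ∈ range N, min (q t j) 1 +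
        δ * ∑ t ∈ range H, ∑ j ∈ range N, if q t j < 1 then d t j else 0 := by
  simp only [mul_sum, mul_ite, mul_zero, ← sum_add_distrib]
  exact sum_congr rfl fun t _ => sum_congr rfl fun j _ =>
    min_add_one_of_floor_le_of_le_ceil (hbr t j).1 (hbr t j).2

theorem exists_pos_step (hq : FracSchedule B N σ q) (hH : ∀ t j, H ≤ t → q t j = 0)
    (hd : IsAdmissibleDir B N σ q d) (hne : ∃ t j, d t j ≠ 0) :
    ∃ δ > 0, FracSchedule B N σ (q + δ • d) ∧
      ∑ t ∈ range H, ∑ j ∈ range N, min ((q + δ • d) t j) 1 =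
        ∑ t ∈ range H, ∑ j ∈ range N, min (q t j) 1 +
          δ * ∑ t ∈ range H, ∑ j ∈ range N, (if q t j < 1 then d t j else 0) ∧
      potential B N H σ (q + δ • d) < potential B N H σ q := by
  obtain ⟨δ, hδ, hall, hhit⟩ := exists_max_step_of_affine_nonneg (moveSlacks B N H σ q d)
    (fun _ => fst_nonneg_of_mem_moveSlacks hq) (fun _ => hd.snd_eq_zero_of_mem_moveSlacks)
    (exists_mem_moveSlacks_snd_neg hq hH hd hne)
  exact ⟨δ, hδ, add_smul_of_moveSlacks hq hH hd hall,
    sum_min_add_smul (floor_le_add_smul_le_ceil hq hH hd hall),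
    potential_add_smul_lt hq hH hd hall hhit⟩

end Step

variable {T : ℕ}

theorem exists_same_value_potential_lt (hq : FracSchedule B N σ q)
    (hH : ∀ t j, T + B + 1 ≤ t → q t j = 0)
    (hopt : ∀ q', FracSchedule B N σ q' → fracValue B N T q' ≤ fracValue B N T q)
    (hF : (fracCoords N (T + B + 1) q).Nonempty) :
    ∃ q', FracSchedule B N σ q' ∧ (∀ t j, T + B + 1 ≤ t → q' t j = 0) ∧
      fracValue B N T q' = fracValue B N T q ∧
      potential B N (T + B + 1) σ q' < potential B N (T + B + 1) σ q := by
  obtain ⟨d, hd, t, j, hdtj⟩ := exists_isAdmissibleDir hq hH hF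
  obtain ⟨δ₁, hδ₁, hq₁, hv₁, hp₁⟩ := exists_pos_step hq hH hd ⟨t, j, hdtj⟩
  obtain ⟨δ₂, hδ₂, hq₂, hv₂, -⟩ := exists_pos_step hq hH hd.neg ⟨t, j, neg_ne_zero.2 hdtj⟩
  have h₁ := hopt _ hq₁
  have h₂ := hopt _ hq₂
  unfold fracValue at h₁ h₂ ⊢
  have hneg : ∀ t j, (if q t j < 1 then (-d) t j else 0) = -(if q t j < 1 then d t j else 0) :=
    fun t j => by split_ifs <;> simp
  simp only [hneg, sum_neg_distrib] at hv₂
  have hslope : ∑ t ∈ range (T + B + 1), ∑ j ∈ range N, (if q t j < 1 then d t j else 0) = 0 := by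
    nlinarith
  refine ⟨q + δ₁ • d, hq₁, fun t j ht => ?_, by rw [hv₁, hslope, mul_zero, add_zero], hp₁⟩
  simp [hH t j ht, hd.eq_zero_of_le hq hH (Or.inl ht)]

theorem exists_int_of_forall_le (hq : FracSchedule B N σ q)
    (hH : ∀ t j, T + B + 1 ≤ t → q t j = 0)
    (hopt : ∀ q', FracSchedule B N σ q' → fracValue B N T q' ≤ fracValue B N T q) :
    ∃ q', FracSchedule B N σ q' ∧ fracValue B N T q' = fracValue B N T q ∧
      ∀ t j, ∃ n : ℤ, q' t j = n := by
  induction h : potential B N (T + B + 1) σ q using Nat.strong_induction_on generalizing q with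
  | _ n ih =>
  by_cases hF : (fracCoords N (T + B + 1) q).Nonempty
  · obtain ⟨q', hq', hH', hv, hlt⟩ := exists_same_value_potential_lt hq hH hopt hF
    obtain ⟨q'', hq'', hv', hint⟩ :=
      ih _ (h ▸ hlt) hq' hH' (fun q'' h'' => hv ▸ hopt q'' h'') rfl
    exact ⟨q'', hq'', hv'.trans hv, hint⟩
  · refine ⟨q, hq, rfl, fun t j => ?_⟩
    obtain ⟨n, hn⟩ :=
      Int.fract_eq_zero_iff.1 (not_not.1 fun h => hF ⟨_, (mem_fracCoords hq hH).2 h⟩)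
    exact ⟨n, hn.symm⟩

end FracSchedule

theorem stmt_7_general (B : ℕ) (N T : ℕ) (σ : ℕ → ℕ → ℕ)
    (q : ℕ → ℕ → ℝ) (hq : FracSchedule B N σ q)
    (hopt : ∀ q', FracSchedule B N σ q' → fracValue B N T q' ≤ fracValue B N T q) :
    (∃ q', FracSchedule B N σ q' ∧ fracValue B N T q' = fracValue B N T q ∧
      ∀ t, Set.Subsingleton {j | ¬∃ n : ℤ, q' t j = (n : ℝ)}) ∧
    (∃ q', FracSchedule B N σ q' ∧ fracValue B N T q' = fracValue B N T q ∧
      ∀ t j, ∃ n : ℤ, q' t j = (n : ℝ)) := by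
  obtain ⟨q', hq', hv, hint⟩ := (hq.truncate (T + B + 1)).exists_int_of_forall_le
    (fun t j ht => if_neg (not_lt.2 ht))
    (fun q'' h'' => by rw [FracSchedule.fracValue_truncate]; exact hopt q'' h'')
  rw [FracSchedule.fracValue_truncate] at hv
  exact ⟨⟨q', hq', hv, fun t x hx => absurd (hint t x) hx⟩, ⟨q', hq', hv, hint⟩⟩

theorem stmt_7 (B : ℕ) (hB : 0 < B) (N T : ℕ) (σ : ℕ → ℕ → ℕ)
    (hσT : ∀ t j, T < t → σ t j = 0) (hσN : ∀ t j, N ≤ j → σ t j = 0)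
    (q : ℕ → ℕ → ℝ) (hq : FracSchedule B N σ q)
    (hopt : ∀ q', FracSchedule B N σ q' → fracValue B N T q' ≤ fracValue B N T q) :
    (∃ q', FracSchedule B N σ q' ∧ fracValue B N T q' = fracValue B N T q ∧
      ∀ t, Set.Subsingleton {j | ¬∃ n : ℤ, q' t j = (n : ℝ)}) ∧
    (∃ q', FracSchedule B N σ q' ∧ fracValue B N T q' = fracValue B N T q ∧
      ∀ t j, ∃ n : ℤ, q' t j = (n : ℝ)) :=
  stmt_7_general B N T σ q hq hopt
end

section
/- For any buffer management algorithm ALG for the shared memory switch, there exists a regular algorithm ALG′ (work-conserving, and discarding packets only upon buffer overflow) that transmits at least as many packets as ALG on every input sequence. -/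
/-!
Two transformations, each of which never decreases the number of packets transmitted from any
queue. First make the run work-conserving: let the new run transmit whenever its queue is
nonempty, and drop from its queue the packets it has already sent ahead of the original run;
its queues are then dominated by the original ones, so it is still a valid run, and a packet
can only be sent ahead of time, never lost. Then make it regular: in every slot accept all
arrivals if they fit into the buffer, and otherwise fall back to the work-conserving run. By
induction the greedy queues dominate the fallback queues, so a queue of the greedy run is
nonempty whenever the corresponding fallback queue is, and it transmits in every such slot.
-/

/-- A run of a buffer-management algorithm on a shared memory switch with
buffer size `B`, queues `0, …, N-1` and arrivals `σ`. `q t j` is the content of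
queue `j` after the admission phase of slot `t` (arbitrary accept/push-out
decisions subject to total occupancy `≤ B`); `x t j ∈ {0,1}` records whether
queue `j` transmits a packet on slot `t` (only possible if nonempty). -/
def IsRun (B N : ℕ) (σ : ℕ → ℕ → ℕ) (q x : ℕ → ℕ → ℕ) : Prop :=
  (∀ t j, N ≤ j → q t j = 0) ∧
  (∀ t, ∑ j ∈ Finset.range N, q t j ≤ B) ∧
  (∀ j, q 0 j ≤ σ 0 j) ∧
  (∀ t j, x t j ≤ min (q t j) 1) ∧
  (∀ t j, q (t + 1) j ≤ q t j - x t j + σ (t + 1) j)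

/-- A run is regular if it is work-conserving (every nonempty queue transmits
on every slot) and it drops packets only when accepting everything would
overflow the buffer. -/
def RegularRun (B N : ℕ) (σ : ℕ → ℕ → ℕ) (q x : ℕ → ℕ → ℕ) : Prop :=
  (∀ t j, x t j = min (q t j) 1) ∧
  ((∃ j < N, q 0 j < σ 0 j) → B < ∑ j ∈ Finset.range N, σ 0 j) ∧
  (∀ t, (∃ j < N, q (t + 1) j < q t j - x t j + σ (t + 1) j) →
    B < ∑ j ∈ Finset.range N, (q t j - x t j + σ (t + 1) j))

namespace SharedMemorySwitch

open Finset

def workConservingTx (r : ℕ → ℕ → ℕ) (t j : ℕ) : ℕ := min (r t j) 1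

section WorkConserving

variable (q x : ℕ → ℕ → ℕ)

/-- The number of packets of queue `j` that the work-conserving run has sent ahead of the run
`(q, x)` by slot `t`; it is capped by `q t j`, since a packet pushed out of `q` is owed nothing. -/
def deficit : ℕ → ℕ → ℕ
  | 0, _ => 0
  | t + 1, j => min (q (t + 1) j) (deficit t j + min (q t j - deficit t j) 1 - x t j)

def workConservingQueue (t j : ℕ) : ℕ := q t j - deficit q x t j

theorem deficit_le (t j : ℕ) : deficit q x t j ≤ q t j := by
  cases t <;> simp [deficit]

theorem workConservingQueue_le (t j : ℕ) : workConservingQueue q x t j ≤ q t j :=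
  Nat.sub_le _ _

variable {q x}

theorem workConservingQueue_succ_le {σ : ℕ → ℕ → ℕ} (hx : ∀ t j, x t j ≤ min (q t j) 1)
    (hq : ∀ t j, q (t + 1) j ≤ q t j - x t j + σ (t + 1) j) (t j : ℕ) :
    workConservingQueue q x (t + 1) j ≤
      workConservingQueue q x t j - workConservingTx (workConservingQueue q x) t j +
        σ (t + 1) j := by
  have := deficit_le q x t j
  have := hx t j
  have := hq t j
  simp only [workConservingQueue, workConservingTx, deficit]
  omega

theorem sum_range_add_deficit_le (hx : ∀ t j, x t j ≤ min (q t j) 1) (τ j : ℕ) :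
    ∑ t ∈ range τ, x t j + deficit q x τ j ≤
      ∑ t ∈ range τ, workConservingTx (workConservingQueue q x) t j := by
  induction τ with
  | zero => simp [deficit]
  | succ τ ih =>
    have := hx τ j
    have := deficit_le q x τ j
    rw [sum_range_succ, sum_range_succ]
    simp only [workConservingTx, workConservingQueue, deficit] at *
    omega

theorem sum_range_le_sum_range_workConservingTx (hx : ∀ t j, x t j ≤ min (q t j) 1)
    (τ j : ℕ) :
    ∑ t ∈ range τ, x t j ≤ ∑ t ∈ range τ, workConservingTx (workConservingQueue q x) t j :=
  le_of_add_le_left (sum_range_add_deficit_le hx τ j)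

theorem isRun_workConservingQueue {B N : ℕ} {σ : ℕ → ℕ → ℕ} (h : IsRun B N σ q x) :
    IsRun B N σ (workConservingQueue q x) (workConservingTx (workConservingQueue q x)) := by
  obtain ⟨hN, hB, h0, hx, hq⟩ := h
  refine ⟨fun t j hj => ?_, fun t => ?_, fun j => ?_, fun t j => le_rfl,
    workConservingQueue_succ_le hx hq⟩
  · exact Nat.eq_zero_of_le_zero (hN t j hj ▸ workConservingQueue_le q x t j)
  · exact (sum_le_sum fun j _ => workConservingQueue_le q x t j).trans (hB t)
  · exact (workConservingQueue_le q x 0 j).trans (h0 j)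

end WorkConserving

section Greedy

variable (B N : ℕ)

def admitOrFallback (load fallback : ℕ → ℕ) (j : ℕ) : ℕ :=
  if ∑ i ∈ range N, load i ≤ B then (if j < N then load j else 0) else fallback j

variable {B N} {load fallback : ℕ → ℕ}

theorem admitOrFallback_eq_zero (hf : ∀ j, N ≤ j → fallback j = 0) {j : ℕ} (hj : N ≤ j) :
    admitOrFallback B N load fallback j = 0 := by
  unfold admitOrFallback
  split_ifs with h₁ h₂ <;> first | omega | exact hf j hj

theorem sum_admitOrFallback_le (hf : ∑ i ∈ range N, fallback i ≤ B) :
    ∑ j ∈ range N, admitOrFallback B N load fallback j ≤ B := by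
  unfold admitOrFallback
  split_ifs with h
  · rwa [sum_congr rfl fun j hj => if_pos (mem_range.mp hj)]
  · exact hf

theorem admitOrFallback_le {j : ℕ} (hf : fallback j ≤ load j) :
    admitOrFallback B N load fallback j ≤ load j := by
  unfold admitOrFallback
  split_ifs <;> omega

theorem le_admitOrFallback {j : ℕ} (hf : fallback j ≤ load j) (hN : N ≤ j → fallback j = 0) :
    fallback j ≤ admitOrFallback B N load fallback j := by
  unfold admitOrFallback
  split_ifs with h₁ h₂
  · exact hf
  · exact (hN (by omega)).le
  · exact le_rfl

theorem lt_sum_of_admitOrFallback_lt {j : ℕ} (hj : j < N)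
    (hlt : admitOrFallback B N load fallback j < load j) : B < ∑ i ∈ range N, load i := by
  by_contra! h
  simp only [admitOrFallback, if_pos h, if_pos hj] at hlt
  exact lt_irrefl _ hlt

variable (B N) (σ r : ℕ → ℕ → ℕ)

def greedyRun : ℕ → ℕ → ℕ
  | 0 => admitOrFallback B N (σ 0) (r 0)
  | t + 1 => admitOrFallback B N
      (fun i => greedyRun t i - min (greedyRun t i) 1 + σ (t + 1) i) (r (t + 1))

variable {B N σ r}

theorem le_greedyRun (h : IsRun B N σ r (workConservingTx r)) (t j : ℕ) :
    r t j ≤ greedyRun B N σ r t j := by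
  obtain ⟨hN, -, h0, -, hr⟩ := h
  induction t generalizing j with
  | zero => exact le_admitOrFallback (h0 j) (hN 0 j)
  | succ t ih =>
    refine le_admitOrFallback ((hr t j).trans ?_) (hN (t + 1) j)
    have := ih j
    simp only [workConservingTx]
    omega

theorem isRun_greedyRun (h : IsRun B N σ r (workConservingTx r)) :
    IsRun B N σ (greedyRun B N σ r) (workConservingTx (greedyRun B N σ r)) := by
  obtain ⟨hN, hB, h0, -, hr⟩ := h
  refine ⟨fun t j hj => ?_, fun t => ?_, fun j => admitOrFallback_le (h0 j), fun t j => le_rfl,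
    fun t j => admitOrFallback_le ((hr t j).trans ?_)⟩
  · cases t <;> exact admitOrFallback_eq_zero (hN _) hj
  · cases t <;> exact sum_admitOrFallback_le (hB _)
  · have := le_greedyRun ⟨hN, hB, h0, fun _ _ => le_rfl, hr⟩ t j
    simp only [workConservingTx]
    omega

theorem regularRun_greedyRun :
    RegularRun B N σ (greedyRun B N σ r) (workConservingTx (greedyRun B N σ r)) :=
  ⟨fun _ _ => rfl, fun ⟨_, hj, hlt⟩ => lt_sum_of_admitOrFallback_lt hj hlt,
    fun _ ⟨_, hj, hlt⟩ => lt_sum_of_admitOrFallback_lt hj hlt⟩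

end Greedy

theorem sum_tx_le_sum_tx_greedyRun {B N : ℕ} {σ q x : ℕ → ℕ → ℕ} (h : IsRun B N σ q x)
    (τ : ℕ) :
    ∑ t ∈ range τ, ∑ j ∈ range N, x t j ≤
      ∑ t ∈ range τ, ∑ j ∈ range N,
        workConservingTx (greedyRun B N σ (workConservingQueue q x)) t j := by
  rw [sum_comm, sum_comm (s := range τ)]
  refine sum_le_sum fun j _ => ?_
  calc ∑ t ∈ range τ, x t j
      ≤ ∑ t ∈ range τ, workConservingTx (workConservingQueue q x) t j :=
        sum_range_le_sum_range_workConservingTx h.2.2.2.1 τ j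
    _ ≤ _ := sum_le_sum fun t _ =>
        min_le_min_right 1 (le_greedyRun (isRun_workConservingQueue h) t j)

end SharedMemorySwitch

open SharedMemorySwitch in
theorem stmt_8_general (B N T : ℕ) (σ : ℕ → ℕ → ℕ)
    (q x : ℕ → ℕ → ℕ) (h : IsRun B N σ q x) :
    ∃ q' x', IsRun B N σ q' x' ∧ RegularRun B N σ q' x' ∧
      ∑ t ∈ Finset.range (T + B + 1), ∑ j ∈ Finset.range N, x t j ≤
        ∑ t ∈ Finset.range (T + B + 1), ∑ j ∈ Finset.range N, x' t j :=
  ⟨_, _, isRun_greedyRun (isRun_workConservingQueue h), regularRun_greedyRun,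
    sum_tx_le_sum_tx_greedyRun h _⟩

theorem stmt_8 (B N T : ℕ) (hB : 0 < B) (σ : ℕ → ℕ → ℕ)
    (hσT : ∀ t j, T < t → σ t j = 0)
    (q x : ℕ → ℕ → ℕ) (h : IsRun B N σ q x) :
    ∃ q' x', IsRun B N σ q' x' ∧ RegularRun B N σ q' x' ∧
      ∑ t ∈ Finset.range (T + B + 1), ∑ j ∈ Finset.range N, x t j ≤
        ∑ t ∈ Finset.range (T + B + 1), ∑ j ∈ Finset.range N, x' t j :=
  stmt_8_general B N T σ q x h
end
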